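/- Let y be a KC-dual feasible solution with induced cost shares ξ_j = Σ_{S⊆F} r_j^S · y_j^S, let α ≥ 1, and let X* ⊆ F be feasible for the full user set U with Σ_{i∈X*} c_i ≤ α · Σ_{j∈U} Σ_{S⊆F} r_j^S y_j^S. Then the cost shares ξ satisfy the core property (for every J ⊆ U and every X ⊆ F feasible for J, Σ_{j∈J} ξ_j ≤ Σ_{i∈X} c_i) and recover at least a 1/α fraction of the cost: Σ_{j∈U} ξ_j ≥ (1/α) · Σ_{i∈X*} c_i. (Corollary to Theorem 1.) -/

import Mathlib

/-!
If `X` covers user `j`, then for every `S` the facilities of `X` outside `S` cover the residual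
requirement `r_j^S`, and truncating their contributions at `r_j^S` loses nothing. Weighting by
`y_j^S` and exchanging sums, dual feasibility bounds the total share of any group `J` by the cost
of any cover of `J`. The recovery bound is the approximation hypothesis divided by `α`.
-/

open Finset

/-- Residual requirement of user `j` given the set `S` of built facilities. -/
noncomputable def resReq {F U : Type*} [DecidableEq F]
    (a : F → U → ℝ) (r : U → ℝ) (S : Finset F) (j : U) : ℝ :=
  max (r j - ∑ i ∈ S, a i j) 0

/-- Residual contribution of facility `i` to user `j` given built facilities `S`. -/
noncomputable def resCon {F U : Type*} [DecidableEq F]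
    (a : F → U → ℝ) (r : U → ℝ) (S : Finset F) (i : F) (j : U) : ℝ :=
  if i ∈ S then 0 else min (a i j) (resReq a r S j)

/-- KC-dual feasibility of a family `y = (y_j^S)`. -/
noncomputable def KCDualFeasible {F U : Type*} [Fintype F] [DecidableEq F] [Fintype U]
    (a : F → U → ℝ) (r : U → ℝ) (c : F → ℝ) (y : U → Finset F → ℝ) : Prop :=
  (∀ j S, 0 ≤ y j S) ∧
    ∀ i : F, ∑ j : U, ∑ S ∈ Finset.univ.filter (fun S : Finset F => i ∉ S),
      resCon a r S i j * y j S ≤ c i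

theorem Finset.min_sum_le_sum_min {ι : Type*} (s : Finset ι) {f : ι → ℝ} {R : ℝ}
    (hf : ∀ i ∈ s, 0 ≤ f i) (hR : 0 ≤ R) :
    min (∑ i ∈ s, f i) R ≤ ∑ i ∈ s, min (f i) R := by
  classical
  induction s using Finset.induction_on with
  | empty => simp [hR]
  | insert k s hk ih =>
    rw [sum_insert hk, sum_insert hk]
    have hfk : 0 ≤ f k := hf k (mem_insert_self k s)
    have hfs : 0 ≤ ∑ i ∈ s, f i := sum_nonneg fun i hi => hf i (mem_insert_of_mem hi)
    have ih := ih fun i hi => hf i (mem_insert_of_mem hi)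
    grind

section Residual

variable {F U : Type*} [DecidableEq F] (a : F → U → ℝ) (r : U → ℝ)

theorem resReq_nonneg (S : Finset F) (j : U) : 0 ≤ resReq a r S j :=
  le_max_right _ _

theorem resCon_nonneg (ha : ∀ i j, 0 ≤ a i j) (S : Finset F) (i : F) (j : U) :
    0 ≤ resCon a r S i j := by
  unfold resCon
  split_ifs
  exacts [le_rfl, le_min (ha i j) (resReq_nonneg a r S j)]

theorem resCon_of_mem {S : Finset F} {i : F} (hi : i ∈ S) (j : U) : resCon a r S i j = 0 :=
  if_pos hi

theorem resReq_le_sum_filter_not_mem (ha : ∀ i j, 0 ≤ a i j) (S X : Finset F) {j : U}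
    (hX : r j ≤ ∑ i ∈ X, a i j) :
    resReq a r S j ≤ ∑ i ∈ X with i ∉ S, a i j := by
  have hsplit := sum_filter_add_sum_filter_not X (· ∈ S) (a · j)
  have hinS : ∑ i ∈ X with i ∈ S, a i j ≤ ∑ i ∈ S, a i j :=
    sum_le_sum_of_subset_of_nonneg (fun i hi => (mem_filter.mp hi).2) fun i _ _ => ha i j
  exact max_le (by linarith) (sum_nonneg fun i _ => ha i j)

/-- The knapsack-cover inequality. -/
theorem resReq_le_sum_resCon (ha : ∀ i j, 0 ≤ a i j) (S X : Finset F) {j : U}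
    (hX : r j ≤ ∑ i ∈ X, a i j) :
    resReq a r S j ≤ ∑ i ∈ X, resCon a r S i j := by
  have hR := resReq_nonneg a r S j
  calc resReq a r S j
      = min (∑ i ∈ X with i ∉ S, a i j) (resReq a r S j) :=
        (min_eq_right (resReq_le_sum_filter_not_mem a r ha S X hX)).symm
    _ ≤ ∑ i ∈ X with i ∉ S, min (a i j) (resReq a r S j) :=
        min_sum_le_sum_min _ (fun i _ => ha i j) hR
    _ = ∑ i ∈ X, resCon a r S i j := by
        rw [sum_filter]
        exact sum_congr rfl fun i _ => by simp only [resCon, ite_not]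

end Residual

section CostShares

variable {F U : Type*} [Fintype F] [DecidableEq F] [Fintype U]
  (a : F → U → ℝ) (r : U → ℝ) (c : F → ℝ) (y : U → Finset F → ℝ)

/-- The cost share `ξ_j` induced by the dual `y`. -/
noncomputable def costShare (j : U) : ℝ :=
  ∑ S : Finset F, resReq a r S j * y j S

variable {a r c y}

theorem KCDualFeasible.sum_resCon_mul_le (hy : KCDualFeasible a r c y) (i : F) :
    ∑ j : U, ∑ S : Finset F, resCon a r S i j * y j S ≤ c i := by
  refine le_of_eq_of_le (sum_congr rfl fun j _ => ?_) (hy.2 i)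
  refine (sum_subset (filter_subset _ _) fun S _ hS => ?_).symm
  rw [resCon_of_mem a r (by simpa using hS), zero_mul]

/-- The core property of the cost shares. -/
theorem KCDualFeasible.sum_costShare_le (ha : ∀ i j, 0 ≤ a i j) (hy : KCDualFeasible a r c y)
    (J : Finset U) (X : Finset F) (hX : ∀ j ∈ J, r j ≤ ∑ i ∈ X, a i j) :
    ∑ j ∈ J, costShare a r y j ≤ ∑ i ∈ X, c i := by
  have hterm : ∀ S i j, 0 ≤ resCon a r S i j * y j S := fun S i j =>
    mul_nonneg (resCon_nonneg a r ha S i j) (hy.1 j S)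
  calc ∑ j ∈ J, costShare a r y j
      ≤ ∑ j ∈ J, ∑ S : Finset F, ∑ i ∈ X, resCon a r S i j * y j S := by
        refine sum_le_sum fun j hj => sum_le_sum fun S _ => ?_
        rw [← sum_mul]
        exact mul_le_mul_of_nonneg_right (resReq_le_sum_resCon a r ha S X (hX j hj)) (hy.1 j S)
    _ ≤ ∑ j : U, ∑ S : Finset F, ∑ i ∈ X, resCon a r S i j * y j S :=
        sum_le_sum_of_subset_of_nonneg (subset_univ J) fun j _ _ =>
          sum_nonneg fun S _ => sum_nonneg fun i _ => hterm S i j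
    _ = ∑ i ∈ X, ∑ j : U, ∑ S : Finset F, resCon a r S i j * y j S := by
        simp only [sum_comm (s := X)]
    _ ≤ ∑ i ∈ X, c i := sum_le_sum fun i _ => hy.sum_resCon_mul_le i

end CostShares

theorem kc_dual_cost_shares_recovery_general
    {F U : Type*} [Fintype F] [DecidableEq F] [Fintype U]
    (a : F → U → ℝ) (r : U → ℝ) (c : F → ℝ)
    (ha : ∀ i j, 0 ≤ a i j)
    (y : U → Finset F → ℝ) (hy : KCDualFeasible a r c y)
    (ξ : U → ℝ) (hξ : ∀ j, ξ j = ∑ S : Finset F, resReq a r S j * y j S)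
    (α : ℝ) (hα : 1 ≤ α)
    (Xstar : Finset F)
    (happrox : ∑ i ∈ Xstar, c i ≤
      α * ∑ j : U, ∑ S : Finset F, resReq a r S j * y j S) :
    (∀ (J : Finset U) (X : Finset F),
      (∀ j ∈ J, r j ≤ ∑ i ∈ X, a i j) →
      ∑ j ∈ J, ξ j ≤ ∑ i ∈ X, c i) ∧
    (1 / α) * ∑ i ∈ Xstar, c i ≤ ∑ j : U, ξ j := by
  obtain rfl : ξ = costShare a r y := funext hξ
  refine ⟨hy.sum_costShare_le ha, ?_⟩
  rw [one_div_mul_eq_div, div_le_iff₀ (by linarith), mul_comm]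
  exact happrox

/-- Corollary to Theorem 1: an α-approximate (relative to the KC-LP dual) integer
solution yields cost shares satisfying the core property that recover
at least a 1/α fraction of the cost. -/
theorem kc_dual_cost_shares_recovery
    {F U : Type*} [Fintype F] [DecidableEq F] [Fintype U]
    (a : F → U → ℝ) (r : U → ℝ) (c : F → ℝ)
    (ha : ∀ i j, 0 ≤ a i j) (hc : ∀ i, 0 ≤ c i)
    (y : U → Finset F → ℝ) (hy : KCDualFeasible a r c y)
    (ξ : U → ℝ) (hξ : ∀ j, ξ j = ∑ S : Finset F, resReq a r S j * y j S)
    (α : ℝ) (hα : 1 ≤ α)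
    (Xstar : Finset F) (hfeas : ∀ j : U, r j ≤ ∑ i ∈ Xstar, a i j)
    (happrox : ∑ i ∈ Xstar, c i ≤
      α * ∑ j : U, ∑ S : Finset F, resReq a r S j * y j S) :
    (∀ (J : Finset U) (X : Finset F),
      (∀ j ∈ J, r j ≤ ∑ i ∈ X, a i j) →
      ∑ j ∈ J, ξ j ≤ ∑ i ∈ X, c i) ∧
    (1 / α) * ∑ i ∈ Xstar, c i ≤ ∑ j : U, ξ j :=
  kc_dual_cost_shares_recovery_general a r c ha y hy ξ hξ α hα Xstar happrox
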